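/- Relabeling a standard set-valued shifted tableau by a monomial agreeing with its descent set yields a weak set-valued shifted tableau: if T is a standard set-valued shifted tableau with n entries and σ = x_{s₁}x_{s₂}···x_{sₙ} satisfies s₁ ≤ s₂ ≤ ... ≤ sₙ with sᵢ < sᵢ₊₁ whenever i ∈ D(T), then the tableau T(σ) obtained by replacing the i-th smallest letter of T by sᵢ (preserving primes) is a weak set-valued shifted tableau. -/

import Mathlib

/-- A shifted tableau: list of rows; row `i` is indented `i` units. -/
abbrev Tableau := List (List ℕ)

/-- Row `i` of a tableau. -/
def trow (T : Tableau) (i : ℕ) : List ℕ := T.getD i []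

/-- Entry of `T` in row `i` and *absolute* column `j` (both 0-indexed). -/
def tentry? (T : Tableau) (i j : ℕ) : Option ℕ :=
  if i ≤ j then (trow T i)[j - i]? else none

/-- The (shifted) shape of a tableau: the list of row lengths. -/
def tshape (T : Tableau) : List ℕ := T.map List.length

/-- A strict partition: strictly decreasing list of positive integers. -/
def IsStrictPartition (l : List ℕ) : Prop :=
  List.Chain' (fun a b => b < a) l ∧ ∀ x ∈ l, 0 < x

/-- Increasing shifted tableau: shape is a shifted shape of a strict partition
(row lengths strictly decrease), entries are positive and strictly increase
along rows and down columns. -/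
def IsIncreasing (T : Tableau) : Prop :=
  (∀ r ∈ T, r ≠ []) ∧
  List.Chain' (fun r s => s.length < r.length) T ∧
  (∀ r ∈ T, List.Chain' (· < ·) r) ∧
  (∀ i j a b, tentry? T i j = some a → tentry? T (i + 1) j = some b → a < b) ∧
  (∀ r ∈ T, ∀ x ∈ r, 0 < x)


/-- Result of inserting one letter: the new tableau, the box (row, absolute
column) where the insertion terminated, and whether the insertion ended with
column insertion or a failed row insertion into an empty row (primed). -/
structure InsRes where
  tab : Tableau
  box : ℕ × ℕ
  primed : Bool
deriving Repr, DecidableEq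

def setEntry (T : Tableau) (i k x : ℕ) : Tableau := T.set i ((trow T i).set k x)

def appendEntry (T : Tableau) (i x : ℕ) : Tableau :=
  if i < T.length then T.set i (trow T i ++ [x]) else T ++ [[x]]

/-- The rows having a box in absolute column `c`. -/
def colRows (T : Tableau) (c : ℕ) : List ℕ :=
  (List.range T.length).filter (fun i => (tentry? T i c).isSome)

inductive HMode where
  | row (r : ℕ)
  | col (c : ℕ)

/-- One step of shifted Hecke insertion (Patrias–Pylyavskyy): insert `x`
into row `r` (resp. column `c`), either terminating or producing an output
letter to be inserted into the next row (resp. column). -/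
def insertStep (T : Tableau) : HMode → ℕ → InsRes ⊕ (Tableau × HMode × ℕ)
  | .row r, x =>
    let R := trow T r
    match R.findIdx? (fun a => decide (x < a)) with
    | none =>
      let kk := R.length
      let aboveOK : Bool := (r == 0) ||
        ((tentry? T (r - 1) (r + kk)).elim false (fun a => decide (a < x)))
      if ((R.isEmpty : Bool) || decide (R.getLastD 0 < x)) && aboveOK then
        .inl ⟨appendEntry T r x, (r, r + kk), false⟩
      else if R.isEmpty then
        .inl ⟨T, (r - 1, (r - 1) + (trow T (r - 1)).length - 1), true⟩
      else
        .inl ⟨T, ((colRows T (r + kk - 1)).getLastD 0, r + kk - 1), false⟩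
    | some k =>
      let y := R.getD k 0
      let ok : Bool := ((k == 0) || decide (R.getD (k - 1) 0 < x)) &&
        ((r == 0) || (tentry? T (r - 1) (r + k)).elim true (fun a => decide (a < x)))
      let T' := if ok then setEntry T r k x else T
      if k == 0 then .inr (T', .col (r + 1), y) else .inr (T', .row (r + 1), y)
  | .col c, x =>
    let rows := colRows T c
    match rows.find? (fun i => decide (x < (tentry? T i c).getD 0)) with
    | none =>
      let istar := (rows.getLast?).elim 0 (· + 1)
      let k := c - istar
      let R := trow T istar
      let ok : Bool := decide (istar ≤ c) && (R.length == k) &&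
        ((k == 0) || decide (R.getD (k - 1) 0 < x)) &&
        ((istar == 0) || (tentry? T (istar - 1) c).elim false (fun a => decide (a < x)))
      if ok then
        .inl ⟨appendEntry T istar x, (istar, c), true⟩
      else
        let ib := rows.getLastD 0
        .inl ⟨T, (ib, ib + (trow T ib).length - 1), true⟩
    | some i =>
      let k := c - i
      let y := (trow T i).getD k 0
      let ok : Bool := ((k == 0) || decide ((trow T i).getD (k - 1) 0 < x)) &&
        ((i == 0) || (tentry? T (i - 1) c).elim true (fun a => decide (a < x)))
      let T' := if ok then setEntry T i k x else T
      .inr (T', .col (c + 1), y)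

def insertAux : ℕ → Tableau → HMode → ℕ → InsRes
  | 0, T, _, _ => ⟨T, (0, 0), false⟩
  | fuel + 1, T, m, x =>
    match insertStep T m x with
    | .inl res => res
    | .inr (T', m', x') => insertAux fuel T' m' x'

/-- Shifted Hecke insertion of a single letter `x` into `T`. -/
def insert1 (T : Tableau) (x : ℕ) : InsRes :=
  insertAux (T.length + (trow T 0).length + x + 10) T (.row 0) x

/-- Set-valued shifted tableaux (and weak set-valued shifted tableaux) are
fillings of a shifted shape by multisets of entries `(v, p)`, where `p = true`
means the entry is the primed letter `v'`. -/
abbrev SVTRep := List (List (Multiset (ℕ × Bool)))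

def tabRecStep (TQ : Tableau × SVTRep) (ix : ℕ × ℕ) : Tableau × SVTRep :=
  let res := insert1 TQ.1 ix.2
  let l : ℕ × Bool := (ix.1 + 1, res.primed)
  let r := res.box.1
  let k := res.box.2 - res.box.1
  let Q := TQ.2
  let Q' :=
    if tshape res.tab ≠ tshape TQ.1 then
      if r < Q.length then Q.set r ((Q.getD r []) ++ [{l}]) else Q ++ [[{l}]]
    else
      Q.set r ((Q.getD r []).set k (l ::ₘ (Q.getD r []).getD k 0))
  (res.tab, Q')

def tabRec (w : List ℕ) : Tableau × SVTRep := ((List.range w.length).zip w).foldl tabRecStep ([], [])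

/-- The shifted Hecke insertion tableau of a word. -/
def Tab (w : List ℕ) : Tableau := (tabRec w).1

/-- The shifted Hecke insertion recording tableau of a word. -/
def Rec (w : List ℕ) : SVTRep := (tabRec w).2

/-- Key giving the total order `1' < 1 < 2' < 2 < ⋯` ((v, true) means `v'`). -/
def keyOf (e : ℕ × Bool) : ℕ := 2 * e.1 - (if e.2 then 1 else 0)

def boxAt (T : SVTRep) (i k : ℕ) : Multiset (ℕ × Bool) := (T.getD i []).getD k 0

def sshape (T : SVTRep) : List ℕ := T.map List.length

/-- The multiset of all entries of a (weak) set-valued shifted tableau. -/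
def totalMS (T : SVTRep) : Multiset (ℕ × Bool) := (T.map (fun r => r.sum)).sum

/-- Weak set-valued shifted tableau: boxes of a shifted shape filled with
finite nonempty multisets of primed/unprimed positive integers, rows and
columns weakly increasing between boxes, no primed entries on the main
diagonal, each unprimed letter in at most one box per column, each primed
letter in at most one box per row. -/
def IsWSVT (T : SVTRep) : Prop :=
  (∀ r ∈ T, r ≠ []) ∧
  List.Chain' (fun r s => s.length < r.length) T ∧
  (∀ r ∈ T, ∀ b ∈ r, b ≠ 0) ∧
  (∀ e ∈ totalMS T, 0 < e.1) ∧
  (∀ i k, ∀ x ∈ boxAt T i k, ∀ y ∈ boxAt T i (k + 1), keyOf x ≤ keyOf y) ∧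
  (∀ i k, ∀ x ∈ boxAt T i (k + 1), ∀ y ∈ boxAt T (i + 1) k, keyOf x ≤ keyOf y) ∧
  (∀ i, ∀ e ∈ boxAt T i 0, e.2 = false) ∧
  (∀ v c : ℕ, {i | i ≤ c ∧ (v, false) ∈ boxAt T i (c - i)}.Subsingleton) ∧
  (∀ v i : ℕ, {k | (v, true) ∈ boxAt T i k}.Subsingleton)

/-- Set-valued shifted tableau: boxes contain (nonempty) *sets*. -/
def IsSVT (T : SVTRep) : Prop := IsWSVT T ∧ ∀ r ∈ T, ∀ b ∈ r, b.Nodup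

/-- Standard set-valued shifted tableau on `n` letters: each of `1, …, n`
appears exactly once, either primed or unprimed. -/
def IsStdSVT (n : ℕ) (T : SVTRep) : Prop :=
  IsSVT T ∧ Multiset.map Prod.fst (totalMS T) = (Finset.Icc 1 n).val

/-- Position (row, index-in-row) of the box containing a given entry. -/
def posOf (Q : SVTRep) (e : ℕ × Bool) : Option (ℕ × ℕ) :=
  (List.range Q.length).findSome? (fun i =>
    ((Q.getD i []).findIdx? (fun b => decide (e ∈ b))).map (fun k => (i, k)))

/-- Descent set of a standard set-valued shifted tableau. -/
def Ddesc (Q : SVTRep) : Set ℕ :=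
  {i | 1 ≤ i ∧ (
    ((posOf Q (i, false)).isSome ∧ (posOf Q (i + 1, true)).isSome) ∨
    (∃ p q, posOf Q (i, false) = some p ∧ posOf Q (i + 1, false) = some q ∧ p.1 < q.1) ∨
    (∃ p q, posOf Q (i, true) = some p ∧ posOf Q (i + 1, true) = some q ∧
      q.1 ≤ p.1 ∧ p ≠ q))}

/-- Descent set of a word (1-indexed): `{i : wᵢ > wᵢ₊₁}`. -/
def Dword (w : List ℕ) : Set ℕ :=
  {i | 1 ≤ i ∧ i + 1 ≤ w.length ∧ w.getD i 0 < w.getD (i - 1) 0}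

/-- Boxes (with multiplicity) containing the primed letter `v'`, top to bottom. -/
def occP (T : SVTRep) (v : ℕ) : List ((ℕ × ℕ) × ℕ) :=
  (List.range T.length).flatMap (fun i =>
    (List.range (T.getD i []).length).filterMap (fun k =>
      let m := (boxAt T i k).count (v, true)
      if m = 0 then none else some ((i, k), m)))

/-- Boxes (with multiplicity) containing the unprimed letter `v`, left to right. -/
def occU (T : SVTRep) (v : ℕ) : List ((ℕ × ℕ) × ℕ) :=
  ((List.range T.length).flatMap (fun i =>
    (List.range (T.getD i []).length).filterMap (fun k =>
      let m := (boxAt T i k).count (v, false)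
      if m = 0 then none else some ((i, k), m)))).mergeSort
    (fun p q => p.1.1 + p.1.2 ≤ q.1.1 + q.1.2)

/-- All occurrences of entries of `T` in the order `1' < 1 < 2' < 2 < ⋯`,
occurrences of `v` read left to right and of `v'` top to bottom. -/
def allOcc (T : SVTRep) : List ((ℕ × ℕ) × ℕ × Bool) :=
  (List.range (((totalMS T).map Prod.fst).sum)).flatMap (fun v0 =>
    (occP T (v0 + 1)).map (fun o => (o.1, o.2, true)) ++
    (occU T (v0 + 1)).map (fun o => (o.1, o.2, false)))

def addLabels (S : SVTRep) (p : ℕ × ℕ) (start m : ℕ) (pr : Bool) : SVTRep :=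
  S.set p.1 ((S.getD p.1 []).set p.2
    ((((List.range m).map (fun t => (start + t + 1, pr)) : List (ℕ × Bool)) : Multiset _) +
      (S.getD p.1 []).getD p.2 0))

/-- Standardization of a weak set-valued shifted tableau. -/
def stdize (T : SVTRep) : SVTRep :=
  ((allOcc T).foldl
    (fun Sn o => (addLabels Sn.1 o.1 Sn.2 o.2.1 o.2.2, Sn.2 + o.2.1))
    (T.map (fun r => r.map (fun _ => (0 : Multiset (ℕ × Bool)))), 0)).1
/-! ### Weak K-Knuth equivalence -/

/-- A single weak K-Knuth relation (Buch–Samuel), for positive letters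
`a < b < c`. -/
inductive KStep : List ℕ → List ℕ → Prop
  | dup (u v : List ℕ) (a : ℕ) (ha : 0 < a) :
      KStep (u ++ [a, a] ++ v) (u ++ [a] ++ v)
  | aba (u v : List ℕ) (a b : ℕ) (ha : 0 < a) (hab : a < b) :
      KStep (u ++ [a, b, a] ++ v) (u ++ [b, a, b] ++ v)
  | bac (u v : List ℕ) (a b c : ℕ) (ha : 0 < a) (hab : a < b) (hbc : b < c) :
      KStep (u ++ [b, a, c] ++ v) (u ++ [b, c, a] ++ v)
  | acb (u v : List ℕ) (a b c : ℕ) (ha : 0 < a) (hab : a < b) (hbc : b < c) :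
      KStep (u ++ [a, c, b] ++ v) (u ++ [c, a, b] ++ v)
  | front (u : List ℕ) (a b : ℕ) (ha : 0 < a) (hab : a < b) :
      KStep ([a, b] ++ u) ([b, a] ++ u)

/-- Weak K-Knuth equivalence: symmetric transitive (and reflexive) closure of
the weak K-Knuth relations. -/
def WeakKKnuth : List ℕ → List ℕ → Prop := Relation.EqvGen KStep

/-- Restriction of a word to the letters lying in the interval `[lo, hi]`. -/
def restrictWord (lo hi : ℕ) (w : List ℕ) : List ℕ :=
  w.filter (fun x => decide (lo ≤ x ∧ x ≤ hi))

/-- A word of positive integers. -/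
def PosWord (w : List ℕ) : Prop := ∀ x ∈ w, 0 < x

/-- The reading word of a tableau: rows left to right, bottom to top. -/
def rowword (T : Tableau) : List ℕ := T.reverse.flatten

/-- Unique rectification target: the only increasing shifted tableau in its
weak K-Knuth equivalence class. -/
def IsURT (T : Tableau) : Prop :=
  IsIncreasing T ∧
  ∀ T' : Tableau, IsIncreasing T' → WeakKKnuth (rowword T') (rowword T) → T' = T

/-- The minimal increasing shifted tableau of shape `λ`. -/
def Mtab (lam : List ℕ) : Tableau :=
  (List.range lam.length).map (fun i =>
    (List.range (lam.getD i 0)).map (fun p => 2 * i + p + 1))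

/-! ### Symmetric-function layer -/

/-- Number of entries of `T` equal to `v` or `v'`. -/
def wtOf (T : SVTRep) (v : ℕ) : ℕ := ((totalMS T).filter (fun e => e.1 = v)).card

/-- The weak shifted stable Grothendieck polynomial `K_λ`: the generating
function of weak set-valued shifted tableaux of shape `λ`. -/
noncomputable def Kser (lam : List ℕ) : MvPowerSeries ℕ ℚ :=
  fun μ => (Set.ncard {T : SVTRep | IsWSVT T ∧ sshape T = lam ∧ ∀ v, μ v = wtOf T v} : ℚ)

/-- The shifted stable Grothendieck polynomial `GP_λ` of Ikeda–Naruse: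
`GP_λ = Σ_T (-1)^{|T| - |λ|} x^T` over set-valued shifted tableaux of shape `λ`. -/
noncomputable def GPser (lam : List ℕ) : MvPowerSeries ℕ ℚ :=
  fun μ => ((-1 : ℚ)) ^ (μ.sum (fun _ e => e) - lam.sum) *
    (Set.ncard {T : SVTRep | IsSVT T ∧ sshape T = lam ∧ ∀ v, μ v = wtOf T v} : ℚ)

/-- Substitution `xᵢ ↦ -xᵢ/(1 - xᵢ)` in a multivariate power series, computed
coefficientwise: `[x^b] f(-x/(1-x)) = Σ_{a ≤ b} ([x^a] f) ∏ᵢ (-1)^{aᵢ} C(bᵢ-1, aᵢ-1)`,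
using that `(-x/(1-x))^a = Σ_{b ≥ a} (-1)^a C(b-1, a-1) x^b`. -/
noncomputable def substFrac (f : MvPowerSeries ℕ ℚ) : MvPowerSeries ℕ ℚ :=
  fun b => ∑ a ∈ Finset.Iic b, (MvPowerSeries.coeff a f) *
    ∏ i ∈ b.support,
      (if a i = 0 then 0 else
        ((-1 : ℚ)) ^ (a i) * (Nat.choose (b i - 1) (a i - 1) : ℚ))

/-- A power series in variables `x₀, x₁, …` is symmetric if it is invariant
under every permutation of the variables. -/
def IsSymmPS (f : MvPowerSeries ℕ ℚ) : Prop :=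
  ∀ (σ : Equiv.Perm ℕ) (μ : ℕ →₀ ℕ),
    MvPowerSeries.coeff (Finsupp.equivMapDomain σ μ) f = MvPowerSeries.coeff μ f

/-- The fundamental quasisymmetric function `f_D` for words of length `m`
(descent positions `D`, 1-indexed): `Σ x_{i₁} ⋯ x_{iₘ}` over
`i₁ ≤ ⋯ ≤ iₘ` with `i_j < i_{j+1}` whenever `j ∈ D`. -/
noncomputable def fQ (m : ℕ) (D : Set ℕ) : MvPowerSeries ℕ ℚ :=
  fun μ => (Set.ncard {s : ℕ → ℕ |
    (∀ i, 1 ≤ i → i ≤ m → 1 ≤ s i) ∧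
    (∀ i, i = 0 ∨ m < i → s i = 0) ∧
    (∀ i, 1 ≤ i → i + 1 ≤ m → s i ≤ s (i + 1)) ∧
    (∀ i ∈ D, 1 ≤ i → i + 1 ≤ m → s i < s (i + 1)) ∧
    (∀ v, μ v = Set.ncard {i | 1 ≤ i ∧ i ≤ m ∧ s i = v})} : ℚ)

/-- `IsShuffle u v w` : `w` is a shuffle (interleaving) of `u` and `v`. -/
inductive IsShuffle : List ℕ → List ℕ → List ℕ → Prop
  | nil : IsShuffle [] [] []
  | left {u v w : List ℕ} (a : ℕ) : IsShuffle u v w → IsShuffle (a :: u) v (a :: w)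
  | right {u v w : List ℕ} (a : ℕ) : IsShuffle u v w → IsShuffle u (a :: v) (a :: w)

/-! ### Skew shifted tableaux -/

/-- Entry of a skew filling `R` of shape `ν/λ` in row `i`, absolute column `j`. -/
def skentry? (lam : List ℕ) (R : List (List ℕ)) (i j : ℕ) : Option ℕ :=
  if i + lam.getD i 0 ≤ j then (R.getD i [])[j - i - lam.getD i 0]? else none

/-- Increasing shifted skew tableau of shape `ν/λ`. -/
def IsIncSkew (lam nu : List ℕ) (R : List (List ℕ)) : Prop :=
  lam.length ≤ nu.length ∧ (∀ i, lam.getD i 0 ≤ nu.getD i 0) ∧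
  R.length = nu.length ∧
  (∀ i, (R.getD i []).length = nu.getD i 0 - lam.getD i 0) ∧
  (∀ r ∈ R, List.Chain' (· < ·) r) ∧
  (∀ r ∈ R, ∀ x ∈ r, 0 < x) ∧
  (∀ i j a b, skentry? lam R i j = some a → skentry? lam R (i + 1) j = some b → a < b)

/-! ### Unshifted Hecke insertion and stable Grothendieck polynomials -/

/-- Hecke insertion (Buch–Kresch–Shimozono–Tamvakis–Yong) of a letter into the
rows of an (unshifted) increasing tableau; `prev` is the previous row. -/
def hIns : Option (List ℕ) → List (List ℕ) → ℕ → List (List ℕ)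
  | prev, [], x =>
      match prev with
      | none => [[x]]
      | some P => if P.getD 0 0 < x then [[x]] else []
  | prev, R :: rest, x =>
    match R.findIdx? (fun a => decide (x < a)) with
    | none =>
      let ok : Bool := ((R.isEmpty : Bool) || decide (R.getLastD 0 < x)) &&
        (prev.elim true (fun P => decide (R.length < P.length) && decide (P.getD R.length 0 < x)))
      if ok then (R ++ [x]) :: rest else R :: rest
    | some k =>
      let y := R.getD k 0
      let ok : Bool := ((k == 0) || decide (R.getD (k - 1) 0 < x)) &&
        (prev.elim true (fun P => decide (P.getD k 0 < x)))
      let R' := if ok then R.set k x else R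
      R' :: hIns (some R') rest y

/-- The (unshifted) Hecke insertion tableau `P_K(w)` of a word. -/
def PK (w : List ℕ) : List (List ℕ) := w.foldl (fun T x => hIns none T x) []

/-- Unshifted set-valued tableaux: boxes filled by finite nonempty sets. -/
abbrev USVRep := List (List (Multiset ℕ))

def uboxAt (T : USVRep) (i k : ℕ) : Multiset ℕ := (T.getD i []).getD k 0

/-- Set-valued tableau of (unshifted) partition shape: rows weakly increase,
columns weakly increase between boxes, and each integer appears in at most one
box of each column. -/
def IsUSV (T : USVRep) : Prop :=
  (∀ r ∈ T, r ≠ []) ∧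
  List.Chain' (fun r s => s.length ≤ r.length) T ∧
  (∀ r ∈ T, ∀ b ∈ r, b ≠ 0 ∧ b.Nodup) ∧
  (∀ r ∈ T, ∀ b ∈ r, ∀ x ∈ b, 0 < x) ∧
  (∀ i k, ∀ x ∈ uboxAt T i k, ∀ y ∈ uboxAt T i (k + 1), x ≤ y) ∧
  (∀ i k, ∀ x ∈ uboxAt T i k, ∀ y ∈ uboxAt T (i + 1) k, x ≤ y) ∧
  (∀ v k : ℕ, {i | v ∈ uboxAt T i k}.Subsingleton)

def uwt (T : USVRep) (v : ℕ) : ℕ :=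
  (((T.map (fun r => r.sum)).sum : Multiset ℕ).filter (fun x => x = v)).card

/-- The (signless) stable Grothendieck polynomial `G_μ`: generating function
of set-valued tableaux of shape `μ`. -/
noncomputable def Gser (mu : List ℕ) : MvPowerSeries ℕ ℚ :=
  fun μ => (Set.ncard {T : USVRep | IsUSV T ∧ T.map List.length = mu ∧ ∀ v, μ v = uwt T v} : ℚ)
/-- Relabeling a (standard) set-valued shifted tableau: the letter `i`
(primed or not) is replaced by `s i`, preserving primes. -/
def relabel (s : ℕ → ℕ) (T : SVTRep) : SVTRep :=
  T.map (fun r => r.map (Multiset.map (fun e => (s e.1, e.2))))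


/-! Relabelling preserves the relative order of two entries whose new labels differ, so only
letters `a < b` with `s a = s b` matter. For those, no `j ∈ [a, b)` is a descent, and chaining the
non-descent condition from `a` to `b` shows: if `a` is unprimed, then so is `b`, in a weakly higher
row; if both are primed, then `b` lies in a strictly lower row or in the box of `a`. This rules out
each possible violation: `v'` after `v` along a row or column, an unprimed label twice in a column,
a primed label twice in a row. -/

namespace List

theorem getD_le_sum {M : Type*} [AddCommMonoid M] [PartialOrder M] [CanonicallyOrderedAdd M]
    (l : List M) (i : ℕ) : l.getD i 0 ≤ l.sum := by
  rw [getD_eq_getElem?_getD]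
  cases h : l[i]? with
  | none => exact zero_le
  | some m => exact le_sum_of_mem (mem_of_getElem? h)

theorem mem_sum_iff_exists_mem_getD {α : Type*} {l : List (Multiset α)} {x : α} :
    x ∈ l.sum ↔ ∃ i, x ∈ l.getD i 0 := by
  induction l with
  | nil => simp
  | cons m t ih =>
    rw [sum_cons, Multiset.mem_add, ih,
      ← Nat.or_exists_add_one (p := fun i => x ∈ (m :: t).getD i 0)]
    simp only [getD_cons_zero, getD_cons_succ]

theorem eq_of_mem_getD_of_nodup_map_sum {α β : Type*} {f : α → β} {l : List (Multiset α)}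
    (hl : (l.sum.map f).Nodup) {x y : α} {i j : ℕ}
    (hx : x ∈ l.getD i 0) (hy : y ∈ l.getD j 0) (hxy : f x = f y) : i = j := by
  induction l generalizing i j with
  | nil => simp at hx
  | cons m t ih =>
    rw [sum_cons, Multiset.map_add, Multiset.nodup_add] at hl
    have hdisj {x y : α} {j : ℕ} (hx : x ∈ m) (hy : y ∈ t.getD j 0) : f x ≠ f y := fun h =>
      Multiset.disjoint_left.mp hl.2.2 (Multiset.mem_map_of_mem f hx)
        (h ▸ Multiset.mem_map_of_mem f (Multiset.mem_of_le (t.getD_le_sum j) hy))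
    cases i <;> cases j <;> simp only [getD_cons_zero, getD_cons_succ] at hx hy
    · rfl
    · exact absurd hxy (hdisj hx hy)
    · exact absurd hxy.symm (hdisj hy hx)
    · rw [ih hl.2.1 hx hy]

theorem getD_map_sum {M : Type*} [AddMonoid M] (L : List (List M)) (i : ℕ) :
    (L.map sum).getD i 0 = (L.getD i []).sum := by
  simpa using getD_map sum (l := L) (d := []) (n := i)

end List

section Tableau

variable {T : SVTRep}

theorem mem_totalMS_iff {e : ℕ × Bool} : e ∈ totalMS T ↔ ∃ i k, e ∈ boxAt T i k := by
  simp only [totalMS, boxAt, List.mem_sum_iff_exists_mem_getD, List.getD_map_sum]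

theorem boxAt_le_totalMS (T : SVTRep) (i k : ℕ) : boxAt T i k ≤ totalMS T :=
  ((T.getD i []).getD_le_sum k).trans (List.getD_map_sum T i ▸ (T.map List.sum).getD_le_sum i)

theorem lt_length_of_mem_boxAt {e : ℕ × Bool} {i k : ℕ} (h : e ∈ boxAt T i k) :
    i < T.length ∧ k < (T.getD i []).length := by
  have hk : k < (T.getD i []).length := by
    by_contra hk
    rw [boxAt, List.getD_eq_default _ _ (not_lt.mp hk)] at h
    exact Multiset.notMem_zero _ h
  refine ⟨?_, hk⟩
  by_contra hi
  rw [List.getD_eq_default _ _ (not_lt.mp hi)] at hk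
  exact Nat.not_lt_zero _ hk

theorem eq_of_mem_boxAt (hnd : ((totalMS T).map Prod.fst).Nodup) {a : ℕ} {p q : Bool}
    {i k i' k' : ℕ} (hx : (a, p) ∈ boxAt T i k) (hy : (a, q) ∈ boxAt T i' k') :
    p = q ∧ i = i' ∧ k = k' := by
  have hrow : ∀ {e i k}, e ∈ boxAt T i k → e ∈ (T.map List.sum).getD i 0 := fun h => by
    rw [List.getD_map_sum]; exact Multiset.mem_of_le (List.getD_le_sum _ _) h
  obtain rfl : i = i' := List.eq_of_mem_getD_of_nodup_map_sum hnd (hrow hx) (hrow hy) rfl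
  have hnd_row : (((T.getD i []).sum).map Prod.fst).Nodup :=
    Multiset.nodup_of_le
      (Multiset.map_le_map (List.getD_map_sum T i ▸ (T.map List.sum).getD_le_sum i)) hnd
  obtain rfl : k = k' := List.eq_of_mem_getD_of_nodup_map_sum hnd_row hx hy rfl
  have hnd_box := Multiset.nodup_of_le (Multiset.map_le_map (boxAt_le_totalMS T i k)) hnd
  exact ⟨(Prod.mk.inj (Multiset.inj_on_of_nodup_map hnd_box _ hx _ hy rfl)).2, rfl, rfl⟩

theorem mem_boxAt_of_posOf_eq_some {e : ℕ × Bool} {c : ℕ × ℕ} (h : posOf T e = some c) :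
    e ∈ boxAt T c.1 c.2 := by
  obtain ⟨i, -, hi⟩ := List.exists_of_findSome?_eq_some h
  obtain ⟨k, hk, rfl⟩ := Option.map_eq_some_iff.mp hi
  obtain ⟨hlt, hmem, -⟩ := List.findIdx?_eq_some_iff_getElem.mp hk
  rw [boxAt, List.getD_eq_getElem?_getD (l := T.getD i []), List.getElem?_eq_getElem hlt]
  simpa using hmem

theorem isSome_posOf_of_mem_boxAt {e : ℕ × Bool} {i k : ℕ} (h : e ∈ boxAt T i k) :
    (posOf T e).isSome := by
  obtain ⟨hi, hk⟩ := lt_length_of_mem_boxAt h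
  refine List.findSome?_isSome_iff.mpr ⟨i, List.mem_range.mpr hi, ?_⟩
  simp only [Option.isSome_map, List.findIdx?_isSome, List.any_eq_true, decide_eq_true_eq]
  rw [boxAt, List.getD_eq_getElem?_getD (l := T.getD i []), List.getElem?_eq_getElem hk] at h
  exact ⟨_, List.getElem_mem hk, h⟩

theorem posOf_eq_some (hnd : ((totalMS T).map Prod.fst).Nodup) {e : ℕ × Bool} {i k : ℕ}
    (h : e ∈ boxAt T i k) : posOf T e = some (i, k) := by
  obtain ⟨c, hc⟩ := Option.isSome_iff_exists.mp (isSome_posOf_of_mem_boxAt h)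
  obtain ⟨-, rfl, rfl⟩ := eq_of_mem_boxAt hnd h (mem_boxAt_of_posOf_eq_some hc)
  exact hc


theorem IsWSVT.boxAt_ne_zero (hW : IsWSVT T) {i k : ℕ} (hi : i < T.length)
    (hk : k < (T.getD i []).length) : boxAt T i k ≠ 0 := by
  rw [List.getD_eq_getElem _ _ hi] at hk
  refine hW.2.2.1 _ (List.getElem_mem hi) _ ?_
  rw [boxAt, List.getD_eq_getElem _ _ hi, List.getD_eq_getElem _ _ hk]
  exact List.getElem_mem hk

theorem IsWSVT.length_succ_lt (hW : IsWSVT T) {m : ℕ} (hm : m + 1 < T.length) :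
    (T.getD (m + 1) []).length < (T.getD m []).length := by
  rw [List.getD_eq_getElem _ _ hm, List.getD_eq_getElem _ _ (by omega)]
  exact List.isChain_iff_getElem.mp hW.2.1 m hm

theorem IsWSVT.keyOf_le_of_row (hW : IsWSVT T) {i k k' : ℕ} (hkk : k < k') {x y : ℕ × Bool}
    (hx : x ∈ boxAt T i k) (hy : y ∈ boxAt T i k') : keyOf x ≤ keyOf y := by
  induction k', hkk using Nat.le_induction generalizing y with
  | base => exact hW.2.2.2.2.1 i k x hx y hy
  | succ m hm ih =>
    obtain ⟨hi, hk⟩ := lt_length_of_mem_boxAt hy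
    obtain ⟨z, hz⟩ := Multiset.exists_mem_of_ne_zero (hW.boxAt_ne_zero (k := m) hi (by omega))
    exact (ih hz).trans (hW.2.2.2.2.1 i m z hz y hy)

theorem IsWSVT.keyOf_le_of_col (hW : IsWSVT T) {c i i' : ℕ} (hii : i < i') (hic : i' ≤ c)
    {x y : ℕ × Bool} (hx : x ∈ boxAt T i (c - i)) (hy : y ∈ boxAt T i' (c - i')) :
    keyOf x ≤ keyOf y := by
  induction i', hii using Nat.le_induction generalizing y with
  | base =>
    rw [show c - i = c - (i + 1) + 1 by omega] at hx
    exact hW.2.2.2.2.2.1 i _ x hx y hy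
  | succ m hm ih =>
    obtain ⟨hi, hk⟩ := lt_length_of_mem_boxAt hy
    have hlen := hW.length_succ_lt hi
    obtain ⟨z, hz⟩ := Multiset.exists_mem_of_ne_zero
      (hW.boxAt_ne_zero (i := m) (k := c - m) (by omega) (by omega))
    refine (ih (by omega) hz).trans (hW.2.2.2.2.2.1 m _ z ?_ y hy)
    rwa [show c - (m + 1) + 1 = c - m by omega]

theorem le_of_keyOf_le {a b : ℕ} {p q : Bool} (h : keyOf (a, p) ≤ keyOf (b, q)) :
    a ≤ b := by
  cases p <;> cases q <;> simp [keyOf] at h <;> omega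

end Tableau

/-- Arguments are `(primed, row, index in row)` of two letters; the relation holds for letters
`a ≤ b` of a standard tableau none of `a, …, b - 1` of which is a descent. -/
def NoDescent (x y : Bool × ℕ × ℕ) : Prop :=
  (x.1 = false → y.1 = false ∧ y.2.1 ≤ x.2.1) ∧
  (x.1 = true → y.1 = true → x.2.1 < y.2.1 ∨ x.2 = y.2)

namespace NoDescent

theorem refl (x : Bool × ℕ × ℕ) : NoDescent x x :=
  ⟨fun h => ⟨h, le_rfl⟩, fun _ _ => Or.inr rfl⟩

theorem trans {x y z : Bool × ℕ × ℕ} (hxy : NoDescent x y) (hyz : NoDescent y z) :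
    NoDescent x z := by
  obtain ⟨p, i, k⟩ := x
  obtain ⟨q, i', k'⟩ := y
  obtain ⟨r, i'', k''⟩ := z
  cases p <;> cases q <;> cases r <;> simp_all [NoDescent] <;> omega

end NoDescent

section Standard

variable {n : ℕ} {T : SVTRep}

theorem noDescent_of_notMem_Ddesc (hnd : ((totalMS T).map Prod.fst).Nodup) {j : ℕ} (hj1 : 1 ≤ j)
    (hj : j ∉ Ddesc T) {p q : Bool} {i k i' k' : ℕ} (hx : (j, p) ∈ boxAt T i k)
    (hy : (j + 1, q) ∈ boxAt T i' k') : NoDescent (p, i, k) (q, i', k') := by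
  have hpx := posOf_eq_some hnd hx
  have hpy := posOf_eq_some hnd hy
  cases p <;> cases q <;> simp_all [Ddesc, NoDescent]
  omega

theorem IsStdSVT.nodup (hT : IsStdSVT n T) : ((totalMS T).map Prod.fst).Nodup :=
  hT.2 ▸ (Finset.Icc 1 n).nodup

theorem IsStdSVT.mem_Icc_of_mem_boxAt (hT : IsStdSVT n T) {a : ℕ} {p : Bool} {i k : ℕ}
    (h : (a, p) ∈ boxAt T i k) : a ∈ Set.Icc 1 n := by
  have ha : a ∈ (totalMS T).map Prod.fst :=
    Multiset.mem_map_of_mem Prod.fst (Multiset.mem_of_le (boxAt_le_totalMS T i k) h)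
  rw [hT.2] at ha
  exact Finset.mem_Icc.mp ha

theorem IsStdSVT.exists_mem_boxAt (hT : IsStdSVT n T) {a : ℕ} (ha : a ∈ Set.Icc 1 n) :
    ∃ p i k, (a, p) ∈ boxAt T i k := by
  have ha : a ∈ (totalMS T).map Prod.fst := hT.2 ▸ Finset.mem_Icc.mpr ha
  obtain ⟨e, he, rfl⟩ := Multiset.mem_map.mp ha
  obtain ⟨i, k, h⟩ := mem_totalMS_iff.mp he
  exact ⟨e.2, i, k, h⟩

theorem IsStdSVT.noDescent_of_label_eq (hT : IsStdSVT n T) {s : ℕ → ℕ}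
    (hmono : MonotoneOn s (Set.Icc 1 n)) (hdesc : ∀ i ∈ Ddesc T, i + 1 ≤ n → s i < s (i + 1))
    {a b : ℕ} {p q : Bool} {i k i' k' : ℕ} (hab : a ≤ b) (hx : (a, p) ∈ boxAt T i k)
    (hy : (b, q) ∈ boxAt T i' k') (hs : s a = s b) : NoDescent (p, i, k) (q, i', k') := by
  induction b, hab using Nat.le_induction generalizing q i' k' with
  | base =>
    obtain ⟨rfl, rfl, rfl⟩ := eq_of_mem_boxAt hT.nodup hx hy
    exact .refl _
  | succ b hab ih =>
    obtain ⟨ha, -⟩ := hT.mem_Icc_of_mem_boxAt hx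
    obtain ⟨-, hb⟩ := hT.mem_Icc_of_mem_boxAt hy
    obtain ⟨r, i'', k'', hz⟩ := hT.exists_mem_boxAt (a := b) ⟨by omega, by omega⟩
    have hsab : s a ≤ s b := hmono ⟨ha, by omega⟩ ⟨by omega, by omega⟩ hab
    have hsb : s b ≤ s (b + 1) := hmono ⟨by omega, by omega⟩ ⟨by omega, hb⟩ (by omega)
    have hbD : b ∉ Ddesc T := fun hD => (hdesc b hD hb).not_ge (by omega)
    exact (ih hz (by omega)).trans (noDescent_of_notMem_Ddesc hT.nodup (by omega) hbD hz hy)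

end Standard

theorem Set.subsingleton_of_forall_not_lt {α : Type*} [LinearOrder α] {S : Set α}
    (h : ∀ a ∈ S, ∀ b ∈ S, ¬a < b) : S.Subsingleton :=
  fun a ha b hb => le_antisymm (not_lt.mp (h b hb a ha)) (not_lt.mp (h a ha b hb))

section Relabel

variable {n : ℕ} {T : SVTRep} {s : ℕ → ℕ}

theorem boxAt_relabel (s : ℕ → ℕ) (T : SVTRep) (i k : ℕ) :
    boxAt (relabel s T) i k = (boxAt T i k).map (fun e => (s e.1, e.2)) := by
  have hrow := List.getD_map T [] (n := i) (List.map (Multiset.map fun e => (s e.1, e.2)))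
  have hbox := List.getD_map (T.getD i []) 0 (n := k) (Multiset.map fun e => (s e.1, e.2))
  rw [List.map_nil] at hrow
  rw [Multiset.map_zero] at hbox
  rw [boxAt, relabel, hrow, hbox, boxAt]

theorem mem_boxAt_relabel {i k v : ℕ} {p : Bool} :
    (v, p) ∈ boxAt (relabel s T) i k ↔ ∃ a, (a, p) ∈ boxAt T i k ∧ s a = v := by
  rw [boxAt_relabel, Multiset.mem_map]
  constructor
  · rintro ⟨⟨a, q⟩, h, he⟩
    obtain ⟨rfl, rfl⟩ := Prod.mk.inj he
    exact ⟨a, h, rfl⟩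
  · rintro ⟨a, h, rfl⟩
    exact ⟨(a, p), h, rfl⟩

theorem IsStdSVT.keyOf_relabel_le (hT : IsStdSVT n T) (hmono : MonotoneOn s (Set.Icc 1 n))
    (hdesc : ∀ i ∈ Ddesc T, i + 1 ≤ n → s i < s (i + 1)) {i k i' k' : ℕ}
    (hkey : ∀ x ∈ boxAt T i k, ∀ y ∈ boxAt T i' k', keyOf x ≤ keyOf y) :
    ∀ x ∈ boxAt (relabel s T) i k, ∀ y ∈ boxAt (relabel s T) i' k', keyOf x ≤ keyOf y := by
  rintro ⟨v, p⟩ hx ⟨w, q⟩ hy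
  obtain ⟨a, ha, rfl⟩ := mem_boxAt_relabel.mp hx
  obtain ⟨b, hb, rfl⟩ := mem_boxAt_relabel.mp hy
  have hab := le_of_keyOf_le (hkey _ ha _ hb)
  have hsab : s a ≤ s b :=
    hmono (hT.mem_Icc_of_mem_boxAt ha) (hT.mem_Icc_of_mem_boxAt hb) hab
  rcases hsab.lt_or_eq with hlt | heq
  · cases p <;> cases q <;> simp [keyOf] <;> omega
  · have := (hT.noDescent_of_label_eq hmono hdesc hab ha hb heq).1
    cases p <;> cases q <;> simp_all [keyOf]

theorem IsStdSVT.subsingleton_relabel_unprimed_col (hT : IsStdSVT n T)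
    (hmono : MonotoneOn s (Set.Icc 1 n)) (hdesc : ∀ i ∈ Ddesc T, i + 1 ≤ n → s i < s (i + 1))
    (v c : ℕ) : {i | i ≤ c ∧ (v, false) ∈ boxAt (relabel s T) i (c - i)}.Subsingleton := by
  refine Set.subsingleton_of_forall_not_lt fun i₁ ⟨_, h₁⟩ i₂ ⟨hc, h₂⟩ hlt => ?_
  obtain ⟨a, ha, rfl⟩ := mem_boxAt_relabel.mp h₁
  obtain ⟨b, hb, hs⟩ := mem_boxAt_relabel.mp h₂
  have hab := le_of_keyOf_le (hT.1.1.keyOf_le_of_col hlt hc ha hb)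
  have : i₂ ≤ i₁ := ((hT.noDescent_of_label_eq hmono hdesc hab ha hb hs.symm).1 rfl).2
  omega

theorem IsStdSVT.subsingleton_relabel_primed_row (hT : IsStdSVT n T)
    (hmono : MonotoneOn s (Set.Icc 1 n)) (hdesc : ∀ i ∈ Ddesc T, i + 1 ≤ n → s i < s (i + 1))
    (v i : ℕ) : {k | (v, true) ∈ boxAt (relabel s T) i k}.Subsingleton := by
  refine Set.subsingleton_of_forall_not_lt fun k₁ h₁ k₂ h₂ hlt => ?_
  obtain ⟨a, ha, rfl⟩ := mem_boxAt_relabel.mp h₁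
  obtain ⟨b, hb, hs⟩ := mem_boxAt_relabel.mp h₂
  have hab := le_of_keyOf_le (hT.1.1.keyOf_le_of_row hlt ha hb)
  have := (hT.noDescent_of_label_eq hmono hdesc hab ha hb hs.symm).2 rfl rfl
  exact hlt.ne (Prod.mk.inj (this.resolve_left (lt_irrefl i))).2

end Relabel

/-- if `T` is a standard set-valued shifted tableau on `n`
letters and `x_{s 1} ⋯ x_{s n}` is a monomial agreeing with the descent set of
`T` (weakly increasing, strictly at descents), then the relabeled tableau
`T(σ)` is a weak set-valued shifted tableau. -/
theorem stmt12 (n : ℕ) (T : SVTRep) (hT : IsStdSVT n T) (s : ℕ → ℕ)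
    (hpos : ∀ i, 1 ≤ i → i ≤ n → 1 ≤ s i)
    (hmono : ∀ i, 1 ≤ i → i + 1 ≤ n → s i ≤ s (i + 1))
    (hdesc : ∀ i ∈ Ddesc T, i + 1 ≤ n → s i < s (i + 1)) :
    IsWSVT (relabel s T) := by
  have hmono' : MonotoneOn s (Set.Icc 1 n) :=
    monotoneOn_of_le_add_one Set.ordConnected_Icc fun i _ hi hi1 => hmono i hi.1 hi1.2
  obtain ⟨hne, hshape, hbox, -, hrow, hcol, hdiag, -, -⟩ := hT.1.1
  refine ⟨?_, ?_, ?_, ?_, fun i k => hT.keyOf_relabel_le hmono' hdesc (hrow i k),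
    fun i k => hT.keyOf_relabel_le hmono' hdesc (hcol i k), ?_,
    hT.subsingleton_relabel_unprimed_col hmono' hdesc,
    hT.subsingleton_relabel_primed_row hmono' hdesc⟩
  · simpa [relabel] using hne
  · rw [relabel, List.Chain', List.isChain_map]
    simp only [List.length_map]
    exact hshape
  · simpa [relabel] using hbox
  · intro ⟨v, p⟩ he
    obtain ⟨i, k, he⟩ := mem_totalMS_iff.mp he
    obtain ⟨a, ha, rfl⟩ := mem_boxAt_relabel.mp he
    obtain ⟨ha1, han⟩ := hT.mem_Icc_of_mem_boxAt ha
    exact hpos a ha1 han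
  · intro i ⟨v, p⟩ he
    obtain ⟨a, ha, -⟩ := mem_boxAt_relabel.mp he
    exact hdiag i (a, p) ha
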